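/- Let A be a real symmetric positive definite 6×6 matrix with 3×3-block decomposition A = [[A_yy, A_yz],[A_zy, A_zz]], let J = diag(2^{−1/2}, 2^{−1/2}, 1), let B be the 6×3 matrix whose upper 3×3 block is O₃ and whose lower 3×3 block is J, let 𝒴(ζ) be the 6×6 matrix with block form [[I₃, −2^{1/2} ζ · I₃],[O₃, O₃]], and let 𝒳(ζ) = J⁻¹ A_zz⁻¹ A_zy · ( −ζ·I₃ | 2^{1/2}(ζ²/2 − 1/24)·I₃ ). Then for every ζ ∈ ℝ the 6×6 matrix A · (B · 𝒳′(ζ) + 𝒴(ζ)) has the block form [[A⁰ · ( I₃ | −2^{1/2} ζ · I₃ )],[O_{3×6}]]; that is, its lower three rows vanish identically and its upper 3×6 block equals A⁰ · ( I₃ | −2^{1/2} ζ · I₃ ), where A⁰ = A_yy − A_yz · A_zz⁻¹ · A_zy. -/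

import Mathlib

/-! Differentiation turns the coefficients −ζ and 2^{1/2}(ζ²/2 − 1/24) of 𝒳 into −1 and
2^{1/2} ζ, and J cancels J⁻¹, so with H = ( I₃ | −2^{1/2} ζ I₃ ) we get B 𝒳′ = [[O], [−A_zz⁻¹ A_zy H]] while 𝒴 = [[H], [O]].
Multiplying by A blockwise, the lower block is A_zy H − A_zz A_zz⁻¹ A_zy H = 0 and the upper
block is (A_yy − A_yz A_zz⁻¹ A_zy) H. -/

open Matrix

noncomputable section

def lo3 : Fin 3 → Fin 6 := fun i => ⟨i, by omega⟩
def hi3 : Fin 3 → Fin 6 := fun i => ⟨i + 3, by omega⟩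

def Ayy (A : Matrix (Fin 6) (Fin 6) ℝ) : Matrix (Fin 3) (Fin 3) ℝ := A.submatrix lo3 lo3
def Ayz (A : Matrix (Fin 6) (Fin 6) ℝ) : Matrix (Fin 3) (Fin 3) ℝ := A.submatrix lo3 hi3
def Azy (A : Matrix (Fin 6) (Fin 6) ℝ) : Matrix (Fin 3) (Fin 3) ℝ := A.submatrix hi3 lo3
def Azz (A : Matrix (Fin 6) (Fin 6) ℝ) : Matrix (Fin 3) (Fin 3) ℝ := A.submatrix hi3 hi3

/-- The Schur complement A⁰ = A_yy − A_yz · A_zz⁻¹ · A_zy. -/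
def A0 (A : Matrix (Fin 6) (Fin 6) ℝ) : Matrix (Fin 3) (Fin 3) ℝ :=
  Ayy A - Ayz A * (Azz A)⁻¹ * Azy A

/-- The diagonal matrix J = diag(2^{−1/2}, 2^{−1/2}, 1). -/
def Jmat : Matrix (Fin 3) (Fin 3) ℝ :=
  Matrix.diagonal ![(Real.sqrt 2)⁻¹, (Real.sqrt 2)⁻¹, 1]

/-- Horizontal concatenation ( M | N ) of two 3×3 blocks into a 3×6 matrix. -/
def hcat (M N : Matrix (Fin 3) (Fin 3) ℝ) : Matrix (Fin 3) (Fin 6) ℝ :=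
  Matrix.of fun i j =>
    if h : (j : ℕ) < 3 then M i ⟨j, h⟩ else N i ⟨(j : ℕ) - 3, by omega⟩

/-- Vertical concatenation of two 3×3 blocks into a 6×3 matrix. -/
def vcat (M N : Matrix (Fin 3) (Fin 3) ℝ) : Matrix (Fin 6) (Fin 3) ℝ :=
  Matrix.of fun i j =>
    if h : (i : ℕ) < 3 then M ⟨i, h⟩ j else N ⟨(i : ℕ) - 3, by omega⟩ j

/-- Vertical stacking of two 3×6 blocks into a 6×6 matrix. -/
def vstack (M N : Matrix (Fin 3) (Fin 6) ℝ) : Matrix (Fin 6) (Fin 6) ℝ :=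
  Matrix.of fun i j =>
    if h : (i : ℕ) < 3 then M ⟨i, h⟩ j else N ⟨(i : ℕ) - 3, by omega⟩ j

/-- The 6×3 matrix B with upper block O₃ and lower block J. -/
def Bmat : Matrix (Fin 6) (Fin 3) ℝ := vcat 0 Jmat

/-- The 6×6 matrix 𝒴(ζ) = [[I₃, −2^{1/2} ζ I₃],[O₃, O₃]]. -/
def Ymat (ζ : ℝ) : Matrix (Fin 6) (Fin 6) ℝ :=
  vstack (hcat (1 : Matrix (Fin 3) (Fin 3) ℝ)
      ((-(Real.sqrt 2) * ζ) • (1 : Matrix (Fin 3) (Fin 3) ℝ))) 0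

/-- 𝒳(ζ) = J⁻¹ A_zz⁻¹ A_zy · ( −ζ·I₃ | 2^{1/2}(ζ²/2 − 1/24)·I₃ ). -/
def Xmat (A : Matrix (Fin 6) (Fin 6) ℝ) (ζ : ℝ) : Matrix (Fin 3) (Fin 6) ℝ :=
  Jmat⁻¹ * (Azz A)⁻¹ * Azy A *
    hcat ((-ζ) • (1 : Matrix (Fin 3) (Fin 3) ℝ))
      ((Real.sqrt 2 * (ζ ^ 2 / 2 - 1 / 24)) • (1 : Matrix (Fin 3) (Fin 3) ℝ))

/-- Entrywise derivative 𝒳′(ζ). -/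
def Xd (A : Matrix (Fin 6) (Fin 6) ℝ) (ζ : ℝ) : Matrix (Fin 3) (Fin 6) ℝ :=
  Matrix.of fun i j => deriv (fun t => Xmat A t i j) ζ

lemma lo3_eq_castAdd (k : Fin 3) : lo3 k = Fin.castAdd 3 k := rfl

lemma hi3_eq_natAdd (k : Fin 3) : hi3 k = Fin.natAdd 3 k := Fin.ext (Nat.add_comm _ _)

lemma hi3_injective : Function.Injective hi3 := fun i j h => by
  simpa [hi3, Fin.ext_iff] using h

lemma sum_fin_six_eq_lo3_add_hi3 (f : Fin 6 → ℝ) :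
    ∑ k, f k = ∑ k : Fin 3, f (lo3 k) + ∑ k : Fin 3, f (hi3 k) := by
  simpa only [lo3_eq_castAdd, hi3_eq_natAdd] using Fin.sum_univ_add (a := 3) (b := 3) f

lemma fin_six_lo3_hi3_induction {p : Fin 6 → Prop} (lo : ∀ k, p (lo3 k)) (hi : ∀ k, p (hi3 k))
    (i : Fin 6) : p i := by
  refine Fin.addCases (m := 3) (n := 3) lo (fun k => ?_) i
  simpa only [hi3_eq_natAdd] using hi k

section Blocks

variable (M N P Q : Matrix (Fin 3) (Fin 3) ℝ) (U V U' V' : Matrix (Fin 3) (Fin 6) ℝ)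

@[simp]
lemma vstack_lo3 (i : Fin 3) (j : Fin 6) : vstack U V (lo3 i) j = U i j := by
  simp [vstack, lo3]

@[simp]
lemma vstack_hi3 (i : Fin 3) (j : Fin 6) : vstack U V (hi3 i) j = V i j := by
  simp [vstack, hi3]

lemma mul_hcat : M * hcat P Q = hcat (M * P) (M * Q) := by
  ext i j
  by_cases h : (j : ℕ) < 3 <;> simp [mul_apply, hcat, h]

lemma vcat_mul : vcat M N * U = vstack (M * U) (N * U) := by
  ext i j
  by_cases h : (i : ℕ) < 3 <;> simp [mul_apply, vcat, vstack, h]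

lemma vstack_add_vstack : vstack U V + vstack U' V' = vstack (U + U') (V + V') := by
  ext i j
  by_cases h : (i : ℕ) < 3 <;> simp [vstack, h]

lemma mul_vstack (A : Matrix (Fin 6) (Fin 6) ℝ) :
    A * vstack U V = vstack (Ayy A * U + Ayz A * V) (Azy A * U + Azz A * V) := by
  ext i j
  induction i using fin_six_lo3_hi3_induction <;>
    simp [mul_apply, sum_fin_six_eq_lo3_add_hi3, Ayy, Ayz, Azy, Azz]

end Blocks

lemma hasDerivAt_hcat_smul_apply {f g : ℝ → ℝ} {f' g' ζ : ℝ} (hf : HasDerivAt f f' ζ)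
    (hg : HasDerivAt g g' ζ) (M N : Matrix (Fin 3) (Fin 3) ℝ) (i : Fin 3) (j : Fin 6) :
    HasDerivAt (fun t => hcat (f t • M) (g t • N) i j) (hcat (f' • M) (g' • N) i j) ζ := by
  simp only [hcat, of_apply]
  split_ifs
  · simpa using hf.mul_const _
  · simpa using hg.mul_const _

lemma Xd_eq (A : Matrix (Fin 6) (Fin 6) ℝ) (ζ : ℝ) :
    Xd A ζ = -(Jmat⁻¹ * (Azz A)⁻¹ * Azy A * hcat 1 ((-(Real.sqrt 2) * ζ) • 1)) := by
  set C := Jmat⁻¹ * (Azz A)⁻¹ * Azy A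
  have hX : ∀ t, Xmat A t = hcat ((-t) • C) ((Real.sqrt 2 * (t ^ 2 / 2 - 1 / 24)) • C) := by
    intro t
    simp only [Xmat, mul_hcat, Matrix.mul_smul, Matrix.mul_one, C]
  have hf : HasDerivAt (fun t : ℝ => -t) (-1) ζ := (hasDerivAt_id ζ).neg
  have hg : HasDerivAt (fun t : ℝ => Real.sqrt 2 * (t ^ 2 / 2 - 1 / 24)) (Real.sqrt 2 * ζ) ζ :=
    ((((hasDerivAt_pow 2 ζ).div_const 2).sub_const (1 / 24)).const_mul _).congr_deriv
      (by norm_num)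
  ext i j
  rw [Xd, of_apply, funext fun t => congrFun₂ (hX t) i j,
    (hasDerivAt_hcat_smul_apply hf hg C C i j).deriv, mul_hcat]
  by_cases h : (j : ℕ) < 3 <;> simp [hcat, h]

lemma Jmat_mul_inv : Jmat * Jmat⁻¹ = 1 :=
  mul_nonsing_inv _ (by simp [Jmat, det_diagonal, Fin.prod_univ_three])

lemma Azz_mul_inv {A : Matrix (Fin 6) (Fin 6) ℝ} (hA : A.PosDef) : Azz A * (Azz A)⁻¹ = 1 :=
  mul_nonsing_inv _ ((isUnit_iff_isUnit_det _).mp (hA.submatrix hi3_injective).isUnit)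

theorem stress_block_structure (A : Matrix (Fin 6) (Fin 6) ℝ) (hA : A.PosDef) :
    ∀ ζ : ℝ,
      A * (Bmat * Xd A ζ + Ymat ζ) =
        vstack
          (A0 A * hcat (1 : Matrix (Fin 3) (Fin 3) ℝ)
            ((-(Real.sqrt 2) * ζ) • (1 : Matrix (Fin 3) (Fin 3) ℝ)))
          0 := by
  intro ζ
  set H := hcat (1 : Matrix (Fin 3) (Fin 3) ℝ) ((-(Real.sqrt 2) * ζ) • 1)
  have hBX : Bmat * Xd A ζ = vstack 0 (-((Azz A)⁻¹ * Azy A * H)) := by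
    rw [Bmat, vcat_mul, Matrix.zero_mul, Xd_eq, Matrix.mul_neg, Matrix.mul_assoc, Matrix.mul_assoc,
      ← Matrix.mul_assoc Jmat, Jmat_mul_inv, Matrix.one_mul, Matrix.mul_assoc]
  rw [hBX, Ymat, vstack_add_vstack, mul_vstack, A0]
  congr 1
  · rw [zero_add, add_zero, Matrix.sub_mul, Matrix.mul_neg, ← sub_eq_add_neg]
    simp only [Matrix.mul_assoc, H]
  · rw [zero_add, add_zero, Matrix.mul_neg, ← Matrix.mul_assoc, ← Matrix.mul_assoc, Azz_mul_inv hA,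
      Matrix.one_mul, add_neg_cancel]
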